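/- Fix real numbers α, η, β with 1 < α < η < β, and real numbers N > 0, A > 0, B > 0. If c ≥ 0 then φ_c has exactly one critical point t⁻ ∈ (0,∞); moreover φ_c″(t⁻) < 0 and t⁻ is a strict global maximizer of φ_c on (0,∞). -/

import Mathlib

/-!
On `(0, ∞)` the derivative factors as `φ_c'(t) = (α / A) t^(η-α-1) G(t)` with
`G(t) = N(η-α)/η - B(β-α)/β · t^(β-η) + αc · t^(-η)`. Since `β > η` and `c ≥ 0`, `G` is strictly
decreasing, positive near `0` and negative near `∞`, so it has exactly one zero `t⁻`. Hence `φ_c'`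
changes sign from `+` to `-` exactly at `t⁻`, which makes `t⁻` the strict global maximizer, and
`G(t⁻) = 0` reduces `φ_c''(t⁻)` to `(α / A) t⁻^(η-α-1) G'(t⁻) < 0`.
-/

/-- The fibering map `φ_c(t) = ((t^η/η)N − (t^β/β)B − c)/((t^α/α)A)` on `(0,∞)`. -/
noncomputable def fib (α η β N A B c : ℝ) : ℝ → ℝ :=
  fun t => ((t ^ η / η) * N - (t ^ β / β) * B - c) / ((t ^ α / α) * A)

open Real Set Filter Topology

section PowerBalance

variable {a b d p q : ℝ}

lemma exists_hasDerivAt_neg_sub_rpow_add_rpow_neg (hb : 0 < b) (hp : 0 < p) (hd : 0 ≤ d)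
    (hq : 0 ≤ q) {t : ℝ} (ht : 0 < t) :
    ∃ D < 0, HasDerivAt (fun t => a - b * t ^ p + d * t ^ (-q)) D t := by
  refine ⟨-(b * (p * t ^ (p - 1))) + d * (-q * t ^ (-q - 1)), ?_, ?_⟩
  · have : 0 ≤ d * (q * t ^ (-q - 1)) := by positivity
    have : 0 < b * (p * t ^ (p - 1)) := by positivity
    linarith
  · exact (((hasDerivAt_rpow_const (.inl ht.ne')).const_mul b).const_sub a).add
      ((hasDerivAt_rpow_const (.inl ht.ne')).const_mul d)

lemma continuousOn_sub_rpow_add_rpow_neg :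
    ContinuousOn (fun t => a - b * t ^ p + d * t ^ (-q)) (Ioi 0) := by
  have hpow (r : ℝ) : ContinuousOn (fun t : ℝ => t ^ r) (Ioi 0) :=
    continuousOn_id.rpow_const fun t ht => .inl (ne_of_gt ht)
  exact (continuousOn_const.sub (continuousOn_const.mul (hpow p))).add
    (continuousOn_const.mul (hpow (-q)))

lemma strictAntiOn_sub_rpow_add_rpow_neg (hb : 0 < b) (hp : 0 < p) (hd : 0 ≤ d) (hq : 0 ≤ q) :
    StrictAntiOn (fun t => a - b * t ^ p + d * t ^ (-q)) (Ioi 0) := by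
  choose! D hD hderiv using fun t (ht : t ∈ Ioi (0 : ℝ)) =>
    exists_hasDerivAt_neg_sub_rpow_add_rpow_neg (a := a) hb hp hd hq ht
  rw [← interior_Ioi] at hD hderiv
  exact strictAntiOn_of_hasDerivWithinAt_neg (convex_Ioi 0) continuousOn_sub_rpow_add_rpow_neg
    (fun t ht => (hderiv t ht).hasDerivWithinAt) hD

lemma exists_sub_rpow_add_rpow_neg_eq_zero (ha : 0 < a) (hb : 0 < b) (hp : 0 < p) (hd : 0 ≤ d)
    (hq : 0 ≤ q) : ∃ t > 0, a - b * t ^ p + d * t ^ (-q) = 0 := by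
  have hsmall : ∀ᶠ t in 𝓝[>] 0, 0 < t ∧ b * t ^ p < a := by
    have h0 : Tendsto (fun t : ℝ => b * t ^ p) (𝓝[>] 0) (𝓝 0) := by
      simpa [zero_rpow hp.ne'] using
        ((continuousAt_rpow_const 0 p (.inr hp.le)).tendsto.mono_left
          nhdsWithin_le_nhds).const_mul b
    exact (eventually_mem_nhdsWithin (a := 0) (s := Ioi 0)).and (h0.eventually (gt_mem_nhds ha))
  have hlarge : ∀ᶠ t in atTop, 1 ≤ t ∧ a + d < b * t ^ p :=
    (eventually_ge_atTop 1).and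
      (((tendsto_rpow_atTop hp).const_mul_atTop hb).eventually_gt_atTop (a + d))
  obtain ⟨t₁, ht₁, hbt₁⟩ := hsmall.exists
  obtain ⟨t₂, ht₂, hbt₂⟩ := hlarge.exists
  have hpos : 0 ≤ a - b * t₁ ^ p + d * t₁ ^ (-q) := by
    have : 0 ≤ d * t₁ ^ (-q) := by positivity
    linarith
  have hneg : a - b * t₂ ^ p + d * t₂ ^ (-q) ≤ 0 := by
    have : d * t₂ ^ (-q) ≤ d :=
      mul_le_of_le_one_right hd (rpow_le_one_of_one_le_of_nonpos ht₂ (neg_nonpos.2 hq))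
    linarith
  obtain ⟨t, ht, hzero⟩ := isPreconnected_Ioi.intermediate_value (mem_Ioi.2 (by linarith))
    (mem_Ioi.2 ht₁) continuousOn_sub_rpow_add_rpow_neg ⟨hneg, hpos⟩
  exact ⟨t, ht, hzero⟩

end PowerBalance

lemma lt_of_hasDerivAt_pos_of_neg {f f' : ℝ → ℝ} {a m s : ℝ} (hm : a < m) (hs : a < s)
    (hsm : s ≠ m) (hf : ∀ t > a, HasDerivAt f (f' t) t) (hpos : ∀ t ∈ Ioo a m, 0 < f' t)
    (hneg : ∀ t > m, f' t < 0) : f s < f m := by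
  have hcont (u v : ℝ) (hu : a < u) : ContinuousOn f (Icc u v) := fun t ht =>
    (hf t (hu.trans_le ht.1)).continuousAt.continuousWithinAt
  rcases hsm.lt_or_gt with hlt | hgt
  · refine strictMonoOn_of_hasDerivWithinAt_pos (f' := f') (convex_Icc s m) (hcont s m hs)
      (fun t ht => ?_) (fun t ht => ?_) (left_mem_Icc.2 hlt.le) (right_mem_Icc.2 hlt.le) hlt
    all_goals rw [interior_Icc] at ht
    · exact (hf t (hs.trans ht.1)).hasDerivWithinAt
    · exact hpos t ⟨hs.trans ht.1, ht.2⟩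
  · refine strictAntiOn_of_hasDerivWithinAt_neg (f' := f') (convex_Icc m s) (hcont m s hm)
      (fun t ht => ?_) (fun t ht => ?_) (left_mem_Icc.2 hgt.le) (right_mem_Icc.2 hgt.le) hgt
    all_goals rw [interior_Icc] at ht
    · exact (hf t (hm.trans ht.1)).hasDerivWithinAt
    · exact hneg t ht.1

section Fibering

variable {α η β N A B c t : ℝ}

lemma fib_eq_of_pos (ht : 0 < t) :
    fib α η β N A B c t = α / A * (N / η * t ^ (η - α) - B / β * t ^ (β - α) - c * t ^ (-α)) := by
  simp only [fib, rpow_sub ht, rpow_neg ht.le, div_eq_mul_inv, mul_inv, inv_inv]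
  ring

lemma hasDerivAt_fib (ht : 0 < t) :
    HasDerivAt (fib α η β N A B c) (α / A * t ^ (η - α - 1) *
      (N * (η - α) / η - B * (β - α) / β * t ^ (β - η) + α * c * t ^ (-η))) t := by
  have hpow (r : ℝ) : HasDerivAt (fun t : ℝ => t ^ r) (r * t ^ (r - 1)) t :=
    hasDerivAt_rpow_const (.inl ht.ne')
  have hsplit (r : ℝ) : t ^ (r - α - 1) = t ^ (η - α - 1) * t ^ (r - η) := by
    rw [← rpow_add ht]
    congr 1
    ring
  have hF := ((((hpow (η - α)).const_mul (N / η)).sub ((hpow (β - α)).const_mul (B / β))).sub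
    ((hpow (-α)).const_mul c)).const_mul (α / A)
  refine (hF.congr_deriv ?_).congr_of_eventuallyEq
    (eventually_of_mem (Ioi_mem_nhds ht) fun s hs => fib_eq_of_pos hs)
  rw [hsplit β, show -α - 1 = 0 - α - 1 by ring, hsplit 0, zero_sub]
  ring

end Fibering

/-- For `N > 0`, `A > 0`, `B > 0` and `c ≥ 0`, the fibering map `φ_c`
has a unique critical point `t⁻ > 0`, which satisfies `φ_c″(t⁻) < 0` and is a
strict global maximizer of `φ_c` on `(0,∞)`. -/
theorem stmt6 (α η β N A B : ℝ) (h1 : 1 < α) (h2 : α < η) (h3 : η < β)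
    (hN : 0 < N) (hA : 0 < A) (hB : 0 < B) (c : ℝ) (hc : 0 ≤ c) :
    ∃ tm : ℝ, 0 < tm ∧ deriv (fib α η β N A B c) tm = 0 ∧
      (∀ t : ℝ, 0 < t → deriv (fib α η β N A B c) t = 0 → t = tm) ∧
      deriv (deriv (fib α η β N A B c)) tm < 0 ∧
      ∀ s : ℝ, 0 < s → s ≠ tm → fib α η β N A B c s < fib α η β N A B c tm := by
  have hα : 0 < α := by linarith
  have hη : 0 < η := by linarith
  set G : ℝ → ℝ := fun t => N * (η - α) / η - B * (β - α) / β * t ^ (β - η) + α * c * t ^ (-η)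
  have ha : 0 < N * (η - α) / η := div_pos (mul_pos hN (sub_pos.2 h2)) hη
  have hb : 0 < B * (β - α) / β := div_pos (mul_pos hB (by linarith)) (by linarith)
  have hd : 0 ≤ α * c := mul_nonneg hα.le hc
  have hG_anti : StrictAntiOn G (Ioi 0) :=
    strictAntiOn_sub_rpow_add_rpow_neg hb (sub_pos.2 h3) hd hη.le
  obtain ⟨tm, htm, hGtm⟩ : ∃ tm > 0, G tm = 0 :=
    exists_sub_rpow_add_rpow_neg_eq_zero ha hb (sub_pos.2 h3) hd hη.le
  have hu : ∀ t > 0, 0 < α / A * t ^ (η - α - 1) := fun t ht => by positivity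
  have hderiv : ∀ t > 0, deriv (fib α η β N A B c) t = α / A * t ^ (η - α - 1) * G t :=
    fun t ht => (hasDerivAt_fib ht).deriv
  refine ⟨tm, htm, by rw [hderiv tm htm, hGtm, mul_zero], fun t ht h0 => ?_, ?_,
    fun s hs hsm => lt_of_hasDerivAt_pos_of_neg htm hs hsm (fun t ht => hasDerivAt_fib ht)
      (fun t ht => mul_pos (hu t ht.1) ?_)
      (fun t ht => mul_neg_of_pos_of_neg (hu t (htm.trans ht)) ?_)⟩
  · rw [hderiv t ht, mul_eq_zero] at h0
    exact hG_anti.injOn ht htm ((h0.resolve_left (hu t ht).ne').trans hGtm.symm)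
  · obtain ⟨D, hD, hGD⟩ : ∃ D < 0, HasDerivAt G D tm :=
      exists_hasDerivAt_neg_sub_rpow_add_rpow_neg hb (sub_pos.2 h3) hd hη.le htm
    have hprod := ((hasDerivAt_rpow_const (p := η - α - 1) (.inl htm.ne')).const_mul
      (α / A)).fun_mul hGD
    rw [(eventuallyEq_of_mem (Ioi_mem_nhds htm) hderiv).deriv_eq, hprod.deriv, hGtm, mul_zero,
      zero_add]
    exact mul_neg_of_pos_of_neg (hu tm htm) hD
  · exact hGtm ▸ hG_anti ht.1 htm ht.2
  · exact hGtm ▸ hG_anti htm (htm.trans ht) ht
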